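/- Let k ≥ 2, N ≥ 2k - 1, and τ(0) = # 0^{N-1}, τ(1) = # 0^{k-2} 1^{N-2k+2} 0^{k-1}. If a k-abelian power u_0 ... u_{e-1} with e ≥ N occurs in τ(w) for an infinite binary word w, then w contains an abelian power v_0 ... v_{e-1} of exponent e with |v_0| = |u_0|/N. -/

import Mathlib

/-- Abelian equivalence of words: each letter occurs equally often. -/
def AbEq {A : Type*} [DecidableEq A] (u v : List A) : Prop :=
  ∀ a : A, u.count a = v.count a

/-- `u` occurs as a (contiguous) factor of the infinite word `x`. -/
def OccursIn {A : Type*} (x : ℕ → A) (u : List A) : Prop :=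
  ∃ i, u = (List.range u.length).map fun j => x (i + j)

/-- An abelian power of exponent `e` and period `m` occurs in `x`. -/
def IsAbPow {A : Type*} [DecidableEq A] (x : ℕ → A) (e m : ℕ) : Prop :=
  0 < e ∧ 0 < m ∧ ∃ u : ℕ → List A,
    (∀ i < e, (u i).length = m) ∧
    (∀ i < e, AbEq (u i) (u 0)) ∧
    OccursIn x (((List.range e).map u).flatten)

/-- The number of (possibly overlapping) occurrences of `z` as a factor of `u`. -/
def FactorCount {A : Type*} [DecidableEq A] (u z : List A) : ℕ :=
  (List.range (u.length + 1 - z.length)).countP fun i =>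
    decide ((u.drop i).take z.length = z)

/-- `k`-abelian equivalence: every nonempty word of length at most `k` occurs
equally often as a factor of `u` and of `v`. -/
def KAbEq {A : Type*} [DecidableEq A] (k : ℕ) (u v : List A) : Prop :=
  ∀ z : List A, z ≠ [] → z.length ≤ k → FactorCount u z = FactorCount v z

/-- A `k`-abelian power of exponent `e` and period `m` occurs in `x`. -/
def IsKAbPow {A : Type*} [DecidableEq A] (x : ℕ → A) (k e m : ℕ) : Prop :=
  0 < e ∧ 0 < m ∧ ∃ u : ℕ → List A,
    (∀ i < e, (u i).length = m) ∧
    (∀ i < e, KAbEq k (u i) (u 0)) ∧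
    OccursIn x (((List.range e).map u).flatten)

/-- The `N`-uniform substitution `τ(0) = # 0^{N-1}`,
`τ(1) = # 0^{k-2} 1^{N-2k+2} 0^{k-1}`, with `# = 2` in `Fin 3`. -/
def tauLetter (k N : ℕ) (a : Fin 2) : List (Fin 3) :=
  if a = 0 then
    (2 : Fin 3) :: List.replicate (N - 1) 0
  else
    (2 : Fin 3) :: (List.replicate (k - 2) 0 ++ List.replicate (N + 2 - 2 * k) 1
      ++ List.replicate (k - 1) 0)

/-- `τ(w)`, applying `τ` letterwise to the infinite binary word `w`. -/
def tauWord (k N : ℕ) (w : ℕ → Fin 2) (n : ℕ) : Fin 3 :=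
  (tauLetter k N (w (n / N))).getD (n % N) 0

/-!
The blocks `u i` are `k`-abelian equivalent, so they contain equally many letters `#`, say `q`;
the first `N` blocks together span `N * |u 0|` consecutive positions of `τ(w)`, of which exactly
`|u 0|` carry a `#`, hence `|u 0| = N * q`. Write the starting position as `N * a + s` with
`s < N`. The factor `1 0^{k-1}` of length `k` occurs in `τ(w)` exactly at the end of each image
`τ(1)`, and the factor `# 0^{k-2} 1` exactly at the start of each `τ(1)`. If `s < k`, the first
factor occurs in block `i` once for each letter `1` of `w[a + i q, a + (i + 1) q)`; if `s ≥ k`,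
the second one occurs once for each letter `1` of `w[a + 1 + i q, a + 1 + (i + 1) q)`. Either
way `k`-abelian equivalence of the blocks makes these windows of `w` abelian equivalent.
-/

section Factors

variable {A : Type*}

def factorAt (x : ℕ → A) (i n : ℕ) : List A :=
  (List.range n).map fun j => x (i + j)

@[simp]
theorem length_factorAt (x : ℕ → A) (i n : ℕ) : (factorAt x i n).length = n := by
  simp [factorAt]

theorem factorAt_add (x : ℕ → A) (i m n : ℕ) :
    factorAt x i (m + n) = factorAt x i m ++ factorAt x (i + m) n := by
  simp [factorAt, List.range_add, Nat.add_assoc]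

theorem take_drop_factorAt (x : ℕ → A) {i L t n : ℕ} (h : t + n ≤ L) :
    ((factorAt x i L).drop t).take n = factorAt x (i + t) n := by
  apply List.ext_getElem
  · simp only [List.length_take, List.length_drop, length_factorAt]
    omega
  · intro j _ _
    simp [factorAt, Nat.add_assoc]

theorem factorAt_succ_eq_cons_iff (x : ℕ → A) (i n : ℕ) (a : A) (l : List A) :
    factorAt x i (n + 1) = a :: l ↔ x i = a ∧ factorAt x (i + 1) n = l := by
  rw [Nat.add_comm n 1, factorAt_add]
  simp [factorAt]

theorem factorAt_succ_eq_concat_iff (x : ℕ → A) (i n : ℕ) (a : A) (l : List A) :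
    factorAt x i (n + 1) = l ++ [a] ↔ factorAt x i n = l ∧ x (i + n) = a := by
  rw [factorAt_add]
  constructor
  · intro h
    obtain ⟨h1, h2⟩ := List.append_inj' h (by simp)
    exact ⟨h1, by simpa [factorAt] using h2⟩
  · rintro ⟨rfl, rfl⟩
    simp [factorAt]

theorem factorAt_eq_replicate_iff (x : ℕ → A) (i n : ℕ) (a : A) :
    factorAt x i n = List.replicate n a ↔ ∀ j < n, x (i + j) = a := by
  simp [factorAt, List.eq_replicate_iff]

theorem count_factorAt [DecidableEq A] (x : ℕ → A) (i n : ℕ) (a : A) :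
    (factorAt x i n).count a = (List.range n).countP fun j => x (i + j) = a := by
  simp only [factorAt, List.count_eq_countP, List.countP_map, Function.comp_def]
  exact List.countP_congr fun j _ => by simp

theorem flatten_map_factorAt (x : ℕ → A) (i m e : ℕ) :
    ((List.range e).map fun j => factorAt x (i + j * m) m).flatten = factorAt x i (e * m) := by
  induction e with
  | zero => simp [factorAt]
  | succ e ih =>
    rw [List.range_succ, List.map_append, List.flatten_append, ih, Nat.succ_mul, factorAt_add]
    simp

theorem eq_factorAt_of_flatten_eq {x : ℕ → A} {u : ℕ → List A} {i m e : ℕ}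
    (hlen : ∀ j < e, (u j).length = m)
    (h : ((List.range e).map u).flatten = factorAt x i (e * m)) :
    ∀ j < e, u j = factorAt x (i + j * m) m := by
  induction e with
  | zero => simp
  | succ e ih =>
    rw [List.range_succ, List.map_append, List.flatten_append, Nat.succ_mul, factorAt_add] at h
    obtain ⟨hinit, hlast⟩ := List.append_inj' h (by simp [hlen e (by omega)])
    intro j hj
    rcases Nat.lt_succ_iff_lt_or_eq.mp hj with hj | rfl
    · exact ih (fun j hj => hlen j (by omega)) hinit j hj
    · simpa using hlast

theorem exists_eq_factorAt_of_occursIn {x : ℕ → A} {u : ℕ → List A} {m e : ℕ}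
    (hlen : ∀ j < e, (u j).length = m) (h : OccursIn x ((List.range e).map u).flatten) :
    ∃ i, ∀ j < e, u j = factorAt x (i + j * m) m := by
  obtain ⟨i, hi⟩ := h
  have hflen : (((List.range e).map u).flatten).length = e * m := by
    rw [List.length_flatten, List.map_map, List.map_congr_left (g := fun _ => m)]
    · simp
    · intro j hj
      exact hlen j (List.mem_range.mp hj)
  refine ⟨i, eq_factorAt_of_flatten_eq hlen ?_⟩
  rw [← hflen]
  exact hi

theorem factorCount_factorAt [DecidableEq A] {x : ℕ → A} {z : List A} {n : ℕ}
    {Q : ℕ → Prop} [DecidablePred Q] (hn : z.length = n)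
    (hz : ∀ c, factorAt x c n = z ↔ Q c) (i L : ℕ) :
    FactorCount (factorAt x i L) z = (List.range (L + 1 - n)).countP fun j => Q (i + j) := by
  unfold FactorCount
  rw [length_factorAt, hn]
  refine List.countP_congr fun t ht => ?_
  rw [List.mem_range] at ht
  rw [take_drop_factorAt x (by omega)]
  simpa using hz (i + t)

end Factors

theorem Nat.mul_add_div_of_lt {N B r : ℕ} (hr : r < N) : (N * B + r) / N = B := by
  rw [Nat.mul_add_div (by omega), Nat.div_eq_of_lt hr, Nat.add_zero]

theorem Nat.mul_add_mod_of_lt' {N B r : ℕ} (hr : r < N) : (N * B + r) % N = r := by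
  rw [Nat.mul_comm, Nat.mul_add_mod_of_lt hr]

theorem List.countP_range_add (p : ℕ → Bool) (m n : ℕ) :
    (List.range (m + n)).countP p =
      (List.range m).countP p + (List.range n).countP fun j => p (m + j) := by
  rw [List.range_add, List.countP_append, List.countP_map]
  rfl

theorem countP_range_mul_of_forall {p : ℕ → Bool} {b m c : ℕ} (t : ℕ)
    (h : ∀ i < t, ((List.range m).countP fun j => p (b + i * m + j)) = c) :
    ((List.range (t * m)).countP fun j => p (b + j)) = t * c := by
  induction t with
  | zero => simp
  | succ t ih =>
    rw [Nat.succ_mul, List.countP_range_add, ih fun i hi => h i (by omega), Nat.succ_mul,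
      ← h t (by omega)]
    simp only [Nat.add_assoc]

theorem Nat.mod_ne_of_lt_of_lt {N B r c : ℕ} (h₁ : c < N * B + r) (h₂ : N * B + r < c + N) :
    c % N ≠ r := by
  intro hc
  have hdiv := Nat.div_add_mod c N
  have hlt : c / N < B := Nat.lt_of_mul_lt_mul_left (a := N) (by omega)
  have hgt : B < c / N + 1 := Nat.lt_of_mul_lt_mul_left (a := N) (by rw [Nat.mul_succ]; omega)
  omega

theorem exists_mul_add_mem_window {N r : ℕ} (hr : r < N) (b : ℕ) :
    ∃ B, b ≤ N * B + r ∧ N * B + r < b + N := by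
  refine ⟨(b + (N - 1 - r)) / N, ?_⟩
  have := Nat.div_add_mod (b + (N - 1 - r)) N
  have := Nat.mod_lt (b + (N - 1 - r)) (by omega : 0 < N)
  omega

section ResidueCount

variable {N r B b L : ℕ} (P : ℕ → Prop) [DecidablePred P]

theorem countP_mod_eq_and_eq_zero (hB : N * B + r < b + N) (hL : b + L ≤ N * B + r) :
    ((List.range L).countP fun j => (b + j) % N = r ∧ P ((b + j) / N)) = 0 :=
  List.countP_eq_zero.mpr fun j hj h => by
    rw [List.mem_range] at hj
    exact Nat.mod_ne_of_lt_of_lt (B := B) (by omega) (by omega) (of_decide_eq_true h).1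

/-- The four window hypotheses say that the positions `≡ r [MOD N]` in `[b, b + L)` are
exactly the `N * (B + i) + r` with `i < q`. -/
theorem countP_mod_eq_and (hr : r < N) (q : ℕ)
    (hB : b ≤ N * B + r) (hB' : N * B + r < b + N)
    (hL : b + L ≤ N * (B + q) + r) (hL' : N * (B + q) + r < b + L + N) :
    ((List.range L).countP fun j => (b + j) % N = r ∧ P ((b + j) / N)) =
      (List.range q).countP fun i => P (B + i) := by
  induction q generalizing B b L with
  | zero => simpa using countP_mod_eq_and_eq_zero P hB' (by simpa using hL)
  | succ q ih =>
    have hmul : N * (B + (q + 1)) = N * B + N + N * q := by ring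
    have hmul' : N * (B + 1 + q) = N * B + N + N * q := by ring
    obtain ⟨L', rfl⟩ : ∃ L', L = (N * B + r - b + 1) + L' :=
      ⟨L - (N * B + r - b + 1), by omega⟩
    rw [List.countP_range_add, List.range_succ, List.countP_append,
      countP_mod_eq_and_eq_zero P hB' (by omega), Nat.add_comm q 1, List.countP_range_add]
    have hpos : b + (N * B + r - b) = N * B + r := by omega
    have hshift : ∀ j, b + (N * B + r - b + 1 + j) = (N * B + r + 1) + j := by omega
    simp only [List.countP_singleton, List.range_one, hpos, hshift, Nat.mul_add_mod_of_lt' hr,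
      Nat.mul_add_div_of_lt hr, Nat.zero_add, Nat.add_zero, ← Nat.add_assoc, true_and]
    congr 1
    exact ih (by rw [Nat.mul_succ]; omega) (by rw [Nat.mul_succ]; omega) (by omega) (by omega)

end ResidueCount

theorem countP_mod_eq_of_window {N r B b : ℕ} (hr : r < N) (hB : b ≤ N * B + r)
    (hB' : N * B + r < b + N) (q : ℕ) :
    ((List.range (N * q)).countP fun j => (b + j) % N = r) = q := by
  have h := countP_mod_eq_and (fun _ => True) (L := N * q) hr q hB hB' (by rw [Nat.mul_add]; omega)
    (by rw [Nat.mul_add]; omega)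
  simpa using h

theorem eq_mul_of_forall_countP_mod_eq {N b m e c : ℕ} (hN : 0 < N) (he : N ≤ e)
    (h : ∀ i < e, ((List.range m).countP fun j => (b + i * m + j) % N = 0) = c) :
    m = N * c := by
  obtain ⟨B, hB, hB'⟩ := exists_mul_add_mem_window hN b
  calc m = (List.range (N * m)).countP fun j => (b + j) % N = 0 :=
        (countP_mod_eq_of_window hN hB hB' m).symm
    _ = N * c := countP_range_mul_of_forall (p := fun n => n % N = 0) N fun i hi => h i (by omega)

def tauOnePrefix (k : ℕ) : List (Fin 3) := 2 :: List.replicate (k - 2) 0 ++ [1]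

def tauOneSuffix (k : ℕ) : List (Fin 3) := 1 :: List.replicate (k - 1) 0

theorem length_tauOnePrefix {k : ℕ} (hk : 2 ≤ k) : (tauOnePrefix k).length = k := by
  simp only [tauOnePrefix, List.length_append, List.length_cons, List.length_replicate,
    List.length_nil]
  omega

theorem length_tauOneSuffix {k : ℕ} (hk : 1 ≤ k) : (tauOneSuffix k).length = k := by
  simp only [tauOneSuffix, List.length_cons, List.length_replicate]
  omega

section Tau

variable {k N : ℕ} (hk : 2 ≤ k) (hN : 2 * k - 1 ≤ N) (w : ℕ → Fin 2)
include hk hN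

theorem tauWord_mul_add (B : ℕ) {r : ℕ} (hr : r < N) :
    tauWord k N w (N * B + r) =
      if r = 0 then 2 else if w B = 1 ∧ k - 1 ≤ r ∧ r + k ≤ N then 1 else 0 := by
  rw [tauWord, Nat.mul_add_div_of_lt hr, Nat.mul_add_mod_of_lt' hr]
  rcases r with _ | r
  · rw [if_pos rfl, tauLetter]
    split_ifs <;> rfl
  · rcases Fin.exists_fin_two.mp ⟨w B, rfl⟩ with h | h <;>
      simp [tauLetter, h, List.getD_eq_getElem?_getD, List.getElem?_append,
        List.getElem?_replicate] <;>
      split_ifs <;> simp_all <;> omega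

theorem tauWord_mul_add_eq_one_iff (B : ℕ) {r : ℕ} (hr : r < N) :
    tauWord k N w (N * B + r) = 1 ↔ w B = 1 ∧ k - 1 ≤ r ∧ r + k ≤ N := by
  rw [tauWord_mul_add hk hN w B hr]
  split_ifs with h0 h1
  · simp only [Fin.reduceEq, false_iff]; omega
  · simpa using h1
  · simpa using h1

theorem tauWord_eq_two_iff (c : ℕ) : tauWord k N w c = 2 ↔ c % N = 0 := by
  conv_lhs => rw [← Nat.div_add_mod c N, tauWord_mul_add hk hN w _ (Nat.mod_lt c (by omega))]
  split_ifs <;> simp_all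

theorem factorAt_tauWord_eq_hash_iff (c : ℕ) :
    factorAt (tauWord k N w) c 1 = [2] ↔ c % N = 0 := by
  simp [factorAt, tauWord_eq_two_iff hk hN w]

theorem factorAt_tauWord_eq_tauOnePrefix_iff (c : ℕ) :
    factorAt (tauWord k N w) c k = tauOnePrefix k ↔ c % N = 0 ∧ w (c / N) = 1 := by
  obtain ⟨k, rfl⟩ : ∃ k', k = k' + 2 := ⟨k - 2, by omega⟩
  rw [tauOnePrefix, Nat.add_sub_cancel, factorAt_succ_eq_concat_iff, factorAt_succ_eq_cons_iff,
    factorAt_eq_replicate_iff, tauWord_eq_two_iff hk hN w, and_assoc]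
  refine and_congr_right fun hc => ?_
  obtain ⟨B, rfl⟩ := Nat.dvd_of_mod_eq_zero hc
  rw [Nat.mul_div_cancel_left B (by omega), tauWord_mul_add_eq_one_iff hk hN w B (by omega)]
  constructor
  · rintro ⟨-, hw, -⟩
    exact hw
  · intro hw
    refine ⟨fun j hj => ?_, hw, by omega, by omega⟩
    rw [Nat.add_assoc, tauWord_mul_add hk hN w B (by omega), if_neg (by omega), if_neg (by omega)]

theorem factorAt_tauWord_eq_tauOneSuffix_iff (c : ℕ) :
    factorAt (tauWord k N w) c k = tauOneSuffix k ↔ c % N = N - k ∧ w (c / N) = 1 := by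
  obtain ⟨k, rfl⟩ : ∃ k', k = k' + 1 := ⟨k - 1, by omega⟩
  obtain ⟨B, s, hs, rfl⟩ : ∃ B s, s < N ∧ c = N * B + s :=
    ⟨c / N, c % N, Nat.mod_lt c (by omega), (Nat.div_add_mod c N).symm⟩
  rw [tauOneSuffix, Nat.add_sub_cancel, factorAt_succ_eq_cons_iff, factorAt_eq_replicate_iff,
    Nat.mul_add_mod_of_lt' hs, Nat.mul_add_div_of_lt hs,
    tauWord_mul_add_eq_one_iff hk hN w B hs]
  constructor
  · rintro ⟨⟨hw, hks, hsk⟩, hzero⟩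
    have hnext := hzero 0 (by omega)
    rw [show N * B + s + 1 + 0 = N * B + (s + 1) by omega,
      tauWord_mul_add hk hN w B (by omega)] at hnext
    refine ⟨?_, hw⟩
    by_contra hne
    rw [if_neg (by omega), if_pos ⟨hw, by omega, by omega⟩] at hnext
    exact absurd hnext (by decide)
  · rintro ⟨rfl, hw⟩
    refine ⟨⟨hw, by omega, by omega⟩, fun j hj => ?_⟩
    rw [Nat.add_assoc, Nat.add_assoc, tauWord_mul_add hk hN w B (by omega), if_neg (by omega),
      if_neg (by omega)]

theorem factorCount_factorAt_tauWord_hash (b L : ℕ) :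
    FactorCount (factorAt (tauWord k N w) b L) [2] =
      (List.range L).countP fun j => (b + j) % N = 0 := by
  simp [factorCount_factorAt (z := [2]) rfl (factorAt_tauWord_eq_hash_iff hk hN w)]

theorem factorCount_factorAt_tauWord_tauOneSuffix {s : ℕ} (hs : s < k) (B q : ℕ) :
    FactorCount (factorAt (tauWord k N w) (N * B + s) (N * q)) (tauOneSuffix k) =
      (factorAt w B q).count 1 := by
  have hNq : N * (B + q) = N * B + N * q := Nat.mul_add N B q
  rw [factorCount_factorAt (length_tauOneSuffix (by omega))
    (factorAt_tauWord_eq_tauOneSuffix_iff hk hN w), count_factorAt]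
  exact countP_mod_eq_and (fun c => w c = 1) (by omega) q (by omega) (by omega) (by omega)
    (by omega)

theorem factorCount_factorAt_tauWord_tauOnePrefix {s : ℕ} (hks : k ≤ s) (hs : s < N)
    (B q : ℕ) :
    FactorCount (factorAt (tauWord k N w) (N * B + s) (N * q)) (tauOnePrefix k) =
      (factorAt w (B + 1) q).count 1 := by
  have hNq : N * (B + 1 + q) = N * B + N + N * q := by ring
  have hN1 : N * (B + 1) = N * B + N := by ring
  rw [factorCount_factorAt (length_tauOnePrefix hk) (factorAt_tauWord_eq_tauOnePrefix_iff hk hN w),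
    count_factorAt]
  exact countP_mod_eq_and (fun c => w c = 1) (by omega) q (by omega) (by omega) (by omega)
    (by omega)

end Tau

theorem List.count_zero_add_count_one (l : List (Fin 2)) : l.count 0 + l.count 1 = l.length := by
  induction l with
  | nil => rfl
  | cons a l ih => fin_cases a <;> simp [← ih] <;> omega

theorem isAbPow_of_forall_count_one_eq {w : ℕ → Fin 2} {e q a : ℕ} (he : 0 < e) (hq : 0 < q)
    (h : ∀ i < e, (factorAt w (a + i * q) q).count 1 = (factorAt w a q).count 1) :
    IsAbPow w e q := by
  refine ⟨he, hq, fun i => factorAt w (a + i * q) q, fun _ _ => length_factorAt .., ?_, a, ?_⟩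
  · intro i hi c
    have hi0 := List.count_zero_add_count_one (factorAt w (a + i * q) q)
    have h00 := List.count_zero_add_count_one (factorAt w a q)
    simp only [length_factorAt, Nat.zero_mul, Nat.add_zero] at *
    fin_cases c
    · have := h i hi
      simp only [Fin.zero_eta, Fin.isValue]
      omega
    · exact h i hi
  · rw [flatten_map_factorAt, length_factorAt]
    rfl

/-- If a `k`-abelian power of exponent `e ≥ N` and period `m` occurs in `τ(w)`,
then `w` contains an abelian power of exponent `e` and period `m / N`. -/
theorem abelian_power_in_preimage_of_tau
    (k N : ℕ) (hk : 2 ≤ k) (hN : 2 * k - 1 ≤ N)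
    (w : ℕ → Fin 2) (e m : ℕ) (he : N ≤ e)
    (h : IsKAbPow (tauWord k N w) k e m) :
    IsAbPow w e (m / N) := by
  obtain ⟨he0, hm0, u, hlen, hkab, hocc⟩ := h
  obtain ⟨i, hu⟩ := exists_eq_factorAt_of_occursIn hlen hocc
  have hblock : ∀ z : List (Fin 3), 0 < z.length → z.length ≤ k → ∀ j < e,
      FactorCount (factorAt (tauWord k N w) (i + j * m) m) z =
        FactorCount (factorAt (tauWord k N w) i m) z := by
    intro z hz hzk j hj
    simpa [hu j hj, hu 0 he0] using hkab j hj z (List.ne_nil_of_length_pos hz) hzk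
  obtain ⟨q, rfl⟩ : ∃ q, m = N * q := ⟨_, eq_mul_of_forall_countP_mod_eq (by omega) he
    fun j hj => by
      simpa [factorCount_factorAt_tauWord_hash hk hN w] using
        hblock [2] Nat.one_pos (Nat.le_of_succ_le hk) j hj⟩
  rw [Nat.mul_div_cancel_left q (by omega)]
  have hq : 0 < q := Nat.pos_of_mul_pos_left hm0
  obtain ⟨a, s, hs, rfl⟩ : ∃ a s, s < N ∧ i = N * a + s :=
    ⟨i / N, i % N, Nat.mod_lt i (by omega), (Nat.div_add_mod i N).symm⟩
  have hstart : ∀ j, N * a + s + j * (N * q) = N * (a + j * q) + s := fun j => by ring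
  rcases Nat.lt_or_ge s k with hsk | hks
  · refine isAbPow_of_forall_count_one_eq (a := a) he0 hq fun j hj => ?_
    have hsuffix := length_tauOneSuffix (Nat.le_of_succ_le hk)
    have := hblock (tauOneSuffix k) (by omega) hsuffix.le j hj
    rwa [hstart, factorCount_factorAt_tauWord_tauOneSuffix hk hN w hsk,
      factorCount_factorAt_tauWord_tauOneSuffix hk hN w hsk] at this
  · refine isAbPow_of_forall_count_one_eq (a := a + 1) he0 hq fun j hj => ?_
    have hprefix := length_tauOnePrefix hk
    have := hblock (tauOnePrefix k) (by omega) hprefix.le j hj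
    rwa [hstart, factorCount_factorAt_tauWord_tauOnePrefix hk hN w hks hs,
      factorCount_factorAt_tauWord_tauOnePrefix hk hN w hks hs, Nat.add_right_comm] at this
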